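/- For every integer n ≥ 1, (1/n!)·∏_{j=0}^{n-1} Γ(2+(n−1+j)/2)·Γ(1/2)/(Γ(2+j/2)·Γ((1+j)/2)·Γ(1+j/2)) is a positive integer, namely ∏_{k=1}^n Cat(k). -/
import Mathlib


open Real Finset

noncomputable def morrisF (n j : ℕ) : ℝ := Real.Gamma (2 + ((n : ℝ) - 1 + j) / 2)

noncomputable def morrisR (j : ℕ) : ℝ :=
  Real.Gamma (1 / 2) /
    (Real.Gamma (2 + (j : ℝ) / 2) * Real.Gamma ((1 + (j : ℝ)) / 2) * Real.Gamma (1 + (j : ℝ) / 2))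

lemma shift_prod (f r : ℕ → ℝ) (n : ℕ) :
    f 0 * ∏ j ∈ Finset.range n, (f (j + 1) * r j) =
      f n * ∏ j ∈ Finset.range n, (f j * r j) := by
  simp only [Finset.prod_mul_distrib]
  rw [← mul_assoc, ← mul_assoc, mul_comm (f 0), ← Finset.prod_range_succ',
    mul_comm (f n) (∏ j ∈ Finset.range n, f j), ← Finset.prod_range_succ]

lemma morris_scalar (n : ℕ) :
    Gamma ((n:ℝ) + 3/2) / Gamma (((n:ℝ)+3)/2) *
      (((n+1).factorial : ℝ) * Real.sqrt π /
        (Gamma (2 + (n:ℝ)/2) * Gamma ((1 + (n:ℝ))/2) * Gamma (1 + (n:ℝ)/2)))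
      = ((n:ℝ)+1) * (catalan (n+1) : ℝ) := by
  have hπ : (0:ℝ) < Real.sqrt π := Real.sqrt_pos.mpr pi_pos
  have h1 : (0:ℝ) < Gamma (((n:ℝ)+3)/2) := Real.Gamma_pos_of_pos (by positivity)
  have h2 : (0:ℝ) < Gamma (2 + (n:ℝ)/2) := Real.Gamma_pos_of_pos (by positivity)
  have h3 : (0:ℝ) < Gamma ((1 + (n:ℝ))/2) := Real.Gamma_pos_of_pos (by positivity)
  have h4 : (0:ℝ) < Gamma (1 + (n:ℝ)/2) := Real.Gamma_pos_of_pos (by positivity)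
  have h5 : (0:ℝ) < Gamma ((n:ℝ)+1) := Real.Gamma_pos_of_pos (by positivity)
  have hA : Gamma ((1 + (n:ℝ))/2) * Gamma (1 + (n:ℝ)/2) =
      (n.factorial : ℝ) * (2:ℝ) ^ (-(n:ℝ)) * Real.sqrt π := by
    have h := Real.Gamma_mul_Gamma_add_half ((1 + (n:ℝ))/2)
    rw [show (1 + (n:ℝ))/2 + 1/2 = 1 + (n:ℝ)/2 by ring,
      show 2 * ((1 + (n:ℝ))/2) = (n:ℝ) + 1 by ring,
      show (1:ℝ) - ((n:ℝ)+1) = -(n:ℝ) by ring,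
      Real.Gamma_nat_eq_factorial] at h
    linarith [h]
  have hB : Gamma (((n:ℝ)+3)/2) * Gamma (2 + (n:ℝ)/2) =
      ((n+2).factorial : ℝ) * (2:ℝ) ^ (-(n:ℝ)-2) * Real.sqrt π := by
    have h := Real.Gamma_mul_Gamma_add_half (((n:ℝ)+3)/2)
    rw [show ((n:ℝ)+3)/2 + 1/2 = 2 + (n:ℝ)/2 by ring,
      show 2 * (((n:ℝ)+3)/2) = ((n+2:ℕ):ℝ) + 1 by push_cast; ring,
      show (1:ℝ) - (((n+2:ℕ):ℝ)+1) = -(n:ℝ)-2 by push_cast; ring,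
      Real.Gamma_nat_eq_factorial] at h
    linarith [h]
  have hC : Gamma ((n:ℝ)+1) * Gamma ((n:ℝ) + 3/2) =
      ((2*n+1).factorial : ℝ) * (2:ℝ) ^ (-(2*(n:ℝ))-1) * Real.sqrt π := by
    have h := Real.Gamma_mul_Gamma_add_half ((n:ℝ)+1)
    rw [show (n:ℝ)+1 + 1/2 = (n:ℝ) + 3/2 by ring,
      show 2 * ((n:ℝ)+1) = ((2*n+1:ℕ):ℝ) + 1 by push_cast; ring,
      show (1:ℝ) - (((2*n+1:ℕ):ℝ)+1) = -(2*(n:ℝ))-1 by push_cast; ring,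
      Real.Gamma_nat_eq_factorial (2*n+1)] at h
    linarith [h]
  have hGn : Gamma ((n:ℝ)+1) = (n.factorial : ℝ) := Real.Gamma_nat_eq_factorial n
  have hp : (2:ℝ) ^ (-(n:ℝ)-2) * (2:ℝ) ^ (-(n:ℝ)) * 2 = (2:ℝ) ^ (-(2*(n:ℝ))-1) := by
    rw [← Real.rpow_add two_pos, ← Real.rpow_add_one (two_ne_zero)]
    congr 1; ring
  rw [div_mul_div_comm, div_eq_iff (by positivity)]
  apply mul_left_cancel₀ (ne_of_gt h5)
  have hN : (catalan (n+1) : ℝ) * ((n+2).factorial : ℝ) * (n.factorial : ℝ)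
      = 2 * ((2*n+1).factorial : ℝ) := by
    exact_mod_cast congrArg (Nat.cast : ℕ → ℝ) (by
      have h1 := succ_mul_catalan_eq_centralBinom (n+1)
      have h3 : 2*(n+1) - (n+1) = n+1 := by omega
      have h2 := Nat.choose_mul_factorial_mul_factorial (show n+1 ≤ 2*(n+1) by omega)
      rw [h3] at h2
      rw [Nat.centralBinom] at h1
      have key' : catalan (n+1) * ((n+2).factorial) * ((n+1).factorial) = (2*n+2).factorial := by
        calc catalan (n+1) * (n+2).factorial * (n+1).factorial
            = ((n+1+1) * catalan (n+1)) * (n+1).factorial * (n+1).factorial := by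
              rw [Nat.factorial_succ (n+1)]; ring
          _ = (2*(n+1)).choose (n+1) * (n+1).factorial * (n+1).factorial := by rw [h1]
          _ = (2*(n+1)).factorial := h2
          _ = (2*n+2).factorial := by ring_nf
      apply Nat.eq_of_mul_eq_mul_right (show 0 < n+1 by omega)
      rw [Nat.factorial_succ n] at key'
      calc catalan (n+1) * (n+2).factorial * n.factorial * (n+1)
          = catalan (n+1) * (n+2).factorial * ((n+1) * n.factorial) := by ring
        _ = (2*n+2).factorial := key'
        _ = (2*n+2) * (2*n+1).factorial := by
            rw [show 2*n+2 = (2*n+1)+1 by ring, Nat.factorial_succ]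
        _ = 2 * (2*n+1).factorial * (n+1) := by ring
      : catalan (n+1) * (n+2).factorial * n.factorial = 2 * (2*n+1).factorial)
  have hfs : ((n+1).factorial : ℝ) = ((n:ℝ)+1) * (n.factorial : ℝ) := by
    push_cast [Nat.factorial_succ]; ring
  calc Gamma ((n:ℝ)+1) * (Gamma ((n:ℝ)+3/2) * (((n+1).factorial : ℝ) * Real.sqrt π))
      = (Gamma ((n:ℝ)+1) * Gamma ((n:ℝ) + 3/2)) * (((n+1).factorial : ℝ) * Real.sqrt π) := by
        ring
    _ = ((2*n+1).factorial : ℝ) * (2:ℝ) ^ (-(2*(n:ℝ))-1) * Real.sqrt π *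
          (((n+1).factorial : ℝ) * Real.sqrt π) := by rw [hC]
    _ = Gamma ((n:ℝ)+1) * (((n:ℝ)+1) * (catalan (n+1) : ℝ) *
          (Gamma (((n:ℝ)+3)/2) *
            (Gamma (2 + (n:ℝ)/2) * Gamma ((1 + (n:ℝ))/2) * Gamma (1 + (n:ℝ)/2)))) := by
        rw [hGn, hfs]
        rw [show Gamma (((n:ℝ)+3)/2) *
              (Gamma (2 + (n:ℝ)/2) * Gamma ((1 + (n:ℝ))/2) * Gamma (1 + (n:ℝ)/2))
            = (Gamma (((n:ℝ)+3)/2) * Gamma (2 + (n:ℝ)/2)) *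
              (Gamma ((1 + (n:ℝ))/2) * Gamma (1 + (n:ℝ)/2)) by ring,
          hB, hA]
        rw [← hp]
        linear_combination (-(Real.sqrt π * Real.sqrt π * (2:ℝ)^(-(n:ℝ)-2) * (2:ℝ)^(-(n:ℝ)) *
          ((n:ℝ)+1) * (n.factorial:ℝ))) * hN

lemma morris_main (n : ℕ) :
    ∏ j ∈ Finset.range n,
        Gamma (2 + ((n : ℝ) - 1 + j) / 2) * Gamma (1 / 2) /
          (Gamma (2 + (j : ℝ) / 2) * Gamma ((1 + (j : ℝ)) / 2) * Gamma (1 + (j : ℝ) / 2))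
      = (n.factorial : ℝ) * ((∏ k ∈ Finset.Icc 1 n, catalan k : ℕ) : ℝ) := by
  induction n with
  | zero => simp
  | succ n ih =>
    have hterm : ∀ m j : ℕ,
        Gamma (2 + ((m : ℝ) - 1 + j) / 2) * Gamma (1 / 2) /
          (Gamma (2 + (j : ℝ) / 2) * Gamma ((1 + (j : ℝ)) / 2) * Gamma (1 + (j : ℝ) / 2))
        = morrisF m j * morrisR j := by
      intro m j
      rw [morrisF, morrisR, mul_div_assoc]
    have hsucc : ∀ j : ℕ, morrisF (n+1) j = morrisF n (j+1) := by
      intro j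
      rw [morrisF, morrisF]
      congr 1
      push_cast
      ring
    have hf0 : morrisF n 0 = Gamma (((n:ℝ)+3)/2) := by
      rw [morrisF]
      congr 1
      push_cast
      ring
    have hfn : morrisF n n = Gamma ((n:ℝ) + 3/2) := by
      rw [morrisF]
      congr 1
      ring
    have hf0pos : (0:ℝ) < morrisF n 0 := by
      rw [hf0]; exact Real.Gamma_pos_of_pos (by positivity)
    have hshift := shift_prod (morrisF n) morrisR n
    have hstep : ∏ j ∈ Finset.range n, (morrisF (n+1) j * morrisR j)
        = morrisF n n / morrisF n 0 * ∏ j ∈ Finset.range n, (morrisF n j * morrisR j) := by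
      rw [div_mul_eq_mul_div, eq_div_iff (ne_of_gt hf0pos), mul_comm _ (morrisF n 0)]
      rw [show (∏ j ∈ Finset.range n, (morrisF (n+1) j * morrisR j))
          = ∏ j ∈ Finset.range n, (morrisF n (j+1) * morrisR j) from
        Finset.prod_congr rfl fun j _ => by rw [hsucc j]]
      exact hshift
    have hlast : morrisF (n+1) n * morrisR n
        = ((n+1).factorial : ℝ) * Real.sqrt π /
          (Gamma (2 + (n:ℝ)/2) * Gamma ((1 + (n:ℝ))/2) * Gamma (1 + (n:ℝ)/2)) := by
      rw [morrisF, morrisR, Real.Gamma_one_half_eq,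
        show 2 + (((n+1:ℕ)) - 1 + (n:ℕ) : ℝ) / 2 = ((n+1:ℕ):ℝ) + 1 by push_cast; ring,
        Real.Gamma_nat_eq_factorial (n+1)]
      ring
    have hIcc : ((∏ k ∈ Finset.Icc 1 (n+1), catalan k : ℕ) : ℝ)
        = ((∏ k ∈ Finset.Icc 1 n, catalan k : ℕ) : ℝ) * (catalan (n+1) : ℝ) := by
      rw [Finset.prod_Icc_succ_top (Nat.succ_le_succ (Nat.zero_le n))]
      push_cast
      ring
    calc ∏ j ∈ Finset.range (n+1),
          Gamma (2 + (((n+1:ℕ)) - 1 + j : ℝ) / 2) * Gamma (1 / 2) /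
            (Gamma (2 + (j : ℝ) / 2) * Gamma ((1 + (j : ℝ)) / 2) * Gamma (1 + (j : ℝ) / 2))
        = ∏ j ∈ Finset.range (n+1), (morrisF (n+1) j * morrisR j) :=
          Finset.prod_congr rfl fun j _ => hterm (n+1) j
      _ = (∏ j ∈ Finset.range n, (morrisF (n+1) j * morrisR j)) * (morrisF (n+1) n * morrisR n) :=
          Finset.prod_range_succ _ _
      _ = (morrisF n n / morrisF n 0 * ∏ j ∈ Finset.range n, (morrisF n j * morrisR j)) *
            (morrisF (n+1) n * morrisR n) := by rw [hstep]
      _ = (morrisF n n / morrisF n 0 * (morrisF (n+1) n * morrisR n)) *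
            ∏ j ∈ Finset.range n, (morrisF n j * morrisR j) := by ring
      _ = (((n:ℝ)+1) * (catalan (n+1) : ℝ)) *
            ((n.factorial : ℝ) * ((∏ k ∈ Finset.Icc 1 n, catalan k : ℕ) : ℝ)) := by
          rw [hfn, hf0, hlast, morris_scalar n,
            show (∏ j ∈ Finset.range n, (morrisF n j * morrisR j))
              = ∏ j ∈ Finset.range n,
                (Gamma (2 + ((n : ℝ) - 1 + j) / 2) * Gamma (1 / 2) /
                  (Gamma (2 + (j : ℝ) / 2) * Gamma ((1 + (j : ℝ)) / 2) * Gamma (1 + (j : ℝ) / 2)))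
              from Finset.prod_congr rfl fun j _ => (hterm n j).symm, ih]
      _ = ((n+1).factorial : ℝ) * ((∏ k ∈ Finset.Icc 1 (n+1), catalan k : ℕ) : ℝ) := by
          rw [hIcc, Nat.factorial_succ]
          push_cast
          ring

/-- Integrality of the Morris product at `a = 2`, `b = 0`, `c = 1/2`: the real number
`(1/n!) ∏_{j=0}^{n-1} Γ(2+(n-1+j)/2)Γ(1/2)/(Γ(2+j/2)Γ((1+j)/2)Γ(1+j/2))` equals the
positive integer `∏_{k=1}^n Cat(k)`. -/
theorem stmt_15 (n : ℕ) (hn : 1 ≤ n) :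
    1 / (n.factorial : ℝ) *
        ∏ j ∈ Finset.range n,
          Gamma (2 + ((n : ℝ) - 1 + j) / 2) * Gamma (1 / 2) /
            (Gamma (2 + (j : ℝ) / 2) * Gamma ((1 + (j : ℝ)) / 2) * Gamma (1 + (j : ℝ) / 2)) =
      ((∏ k ∈ Finset.Icc 1 n, catalan k : ℕ) : ℝ) ∧
    0 < ∏ k ∈ Finset.Icc 1 n, catalan k := by
  constructor
  · rw [morris_main n, one_div, inv_mul_cancel_left₀]
    exact_mod_cast n.factorial_pos.ne'
  · refine Finset.prod_pos fun k _ => ?_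
    have h := succ_mul_catalan_eq_centralBinom k
    have h2 := k.centralBinom_pos
    rcases Nat.eq_zero_or_pos (catalan k) with h0 | h0
    · rw [← h, h0, mul_zero] at h2
      exact absurd h2 (lt_irrefl 0)
    · exact h0
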